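/- Let V be a module over the Iwahori–Hecke algebra H of a finite Coxeter system (W,S) with ℂ-basis {φ_w : w ∈ W} indexed by W, on which the generators act by: T_s φ_w = φ_{ws} if ℓ(ws) = ℓ(w)+1, and T_s φ_w = q_s φ_{ws} + (q_s - 1) φ_w if ℓ(ws) = ℓ(w)-1. Then the (-1)-eigenspace {v ∈ V : T_s v = -v for all s ∈ S} is exactly one-dimensional, spanned by v₀ = Σ_{w∈W} (-1)^{ℓ(w)} q(w)^{-1} φ_w, where q(w) = ∏ q_{s_i} over a reduced expression of w. -/

import Mathlib

/-- Let `V` be a module over the Iwahori–Hecke algebra of a finite Coxeter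
system `(W, S)` with basis `{φ_w : w ∈ W}`, on which the generators act by Casselman-type
formulas: `T s φ_w = φ_{ws}` if `ℓ(ws) = ℓ(w) + 1`, and
`T s φ_w = q s • φ_{ws} + (q s - 1) • φ_w` if `ℓ(ws) = ℓ(w) - 1`. Then the `(-1)`-eigenspace
`{v : T s v = -v for all s}` is exactly one-dimensional, spanned by
`v₀ = Σ_w (-1)^{ℓ(w)} q(w)⁻¹ • φ_w`, where `q(w)` is the multiplicative extension of the
parameters along reduced expressions. -/
theorem hecke_sign_eigenspace_one_dimensional
    {B : Type*} (M : CoxeterMatrix B) {W : Type*} [Group W] (cs : CoxeterSystem M W)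
    [Fintype W]
    (V : Type*) [AddCommGroup V] [Module ℂ V]
    (φ : Module.Basis W ℂ V)
    (q : B → ℝ) (hqpos : ∀ i, 0 < q i)
    (qq : W → ℝ) (hqq1 : qq 1 = 1)
    (hqqmul : ∀ (w : W) (i : B), cs.length (w * cs.simple i) = cs.length w + 1 →
      qq (w * cs.simple i) = qq w * q i)
    (T : B → Module.End ℂ V)
    (hup : ∀ (i : B) (w : W), cs.length (w * cs.simple i) = cs.length w + 1 →
      T i (φ w) = φ (w * cs.simple i))
    (hdown : ∀ (i : B) (w : W), cs.length (w * cs.simple i) + 1 = cs.length w →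
      T i (φ w) = (q i : ℂ) • φ (w * cs.simple i) + ((q i : ℂ) - 1) • φ w) :
    (∀ i : B,
      T i (∑ w : W, ((-1 : ℂ) ^ cs.length w * ((qq w : ℂ))⁻¹) • φ w) =
        -(∑ w : W, ((-1 : ℂ) ^ cs.length w * ((qq w : ℂ))⁻¹) • φ w)) ∧
    (∑ w : W, ((-1 : ℂ) ^ cs.length w * ((qq w : ℂ))⁻¹) • φ w) ≠ 0 ∧
    (∀ v : V, (∀ i : B, T i v = -v) →
      ∃ c : ℂ, v = c • ∑ w : W, ((-1 : ℂ) ^ cs.length w * ((qq w : ℂ))⁻¹) • φ w) := by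
  classical
  set c : W → ℂ := fun w => (-1 : ℂ) ^ cs.length w * ((qq w : ℂ))⁻¹ with hc
  have hq0 : ∀ i : B, (q i : ℂ) ≠ 0 := fun i => by
    exact_mod_cast (hqpos i).ne'
  -- qq is positive
  have hqqpos : ∀ w : W, 0 < qq w := by
    have key : ∀ n (w : W), cs.length w = n → 0 < qq w := by
      intro n
      induction n with
      | zero =>
        intro w hw
        rw [cs.length_eq_zero_iff.mp hw, hqq1]; norm_num
      | succ n ih =>
        intro w hw
        have hne : w ≠ 1 := by
          intro h; rw [h, cs.length_one] at hw; omega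
        obtain ⟨i, hi⟩ := cs.exists_rightDescent_of_ne_one hne
        rw [cs.isRightDescent_iff] at hi
        set w' := w * cs.simple i with hw'
        have hcan : w' * cs.simple i = w := cs.simple_mul_simple_cancel_right i
        have hlen : cs.length (w' * cs.simple i) = cs.length w' + 1 := by
          rw [hcan]; omega
        have := hqqmul w' i hlen
        rw [hcan] at this
        rw [this]
        exact mul_pos (ih w' (by omega)) (hqpos i)
    intro w; exact key (cs.length w) w rfl
  have hqq0 : ∀ w : W, (qq w : ℂ) ≠ 0 := fun w => by
    exact_mod_cast (hqqpos w).ne'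
  -- coefficient recursion
  have crel : ∀ (w : W) (i : B), cs.length (w * cs.simple i) = cs.length w + 1 →
      c (w * cs.simple i) = c w * (-((q i : ℂ))⁻¹) := by
    intro w i hlen
    simp only [hc]
    rw [hlen, pow_succ, hqqmul w i hlen]
    push_cast [mul_inv]
    ring
  -- repr extraction
  have hrepr : ∀ (a : W → ℂ) (u : W), φ.repr (∑ w, a w • φ w) u = a u := by
    intro a u
    rw [map_sum, Finsupp.finset_sum_apply, Finset.sum_eq_single u]
    · simp
    · intro b _ hb; simp [Module.Basis.repr_self, Finsupp.single_apply, hb]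
    · simp
  -- the pair lemma for part 1
  have pairlem : ∀ (i : B) (w : W), cs.length (w * cs.simple i) = cs.length w + 1 →
      (c w • T i (φ w) + c w • φ w) +
        (c (w * cs.simple i) • T i (φ (w * cs.simple i)) +
          c (w * cs.simple i) • φ (w * cs.simple i)) = 0 := by
    intro i w hlen
    set w' := w * cs.simple i with hw'
    have hcan : w' * cs.simple i = w := cs.simple_mul_simple_cancel_right i
    have hdlen : cs.length (w' * cs.simple i) + 1 = cs.length w' := by rw [hcan]; omega
    rw [hup i w hlen, hdown i w' hdlen, hcan, crel w i hlen, ← hw']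
    match_scalars
    · linear_combination (-(c w)) * mul_inv_cancel₀ (hq0 i)
    · linear_combination (-(c w)) * mul_inv_cancel₀ (hq0 i)
  -- Part 1
  have part1 : ∀ i : B, T i (∑ w : W, c w • φ w) = -(∑ w : W, c w • φ w) := by
    intro i
    have hz : (∑ w : W, (c w • T i (φ w) + c w • φ w)) = 0 := by
      apply Finset.sum_involution (fun w _ => w * cs.simple i)
      · intro w _
        rcases cs.length_mul_simple w i with hup' | hdown'
        · exact pairlem i w hup'
        · set w' := w * cs.simple i with hw'
          have hcan : w' * cs.simple i = w := cs.simple_mul_simple_cancel_right i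
          have hlen : cs.length (w' * cs.simple i) = cs.length w' + 1 := by
            rw [hcan]; omega
          have := pairlem i w' hlen
          rw [hcan] at this
          rw [add_comm]; exact this
      · intro w _ _
        intro h
        have := cs.length_mul_simple_ne w i
        rw [h] at this; exact this rfl
      · intro w _; exact Finset.mem_univ _
      · intro w _; exact cs.simple_mul_simple_cancel_right i
    have : T i (∑ w : W, c w • φ w) + (∑ w : W, c w • φ w) = 0 := by
      rw [map_sum]
      simp only [map_smul]
      rw [← Finset.sum_add_distrib]
      exact hz
    exact eq_neg_of_add_eq_zero_left this
  refine ⟨part1, ?_, ?_⟩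
  -- Part 2: v₀ ≠ 0
  · intro h0
    have h0' : (∑ w : W, c w • φ w) = 0 := h0
    have h1 := hrepr c 1
    rw [h0'] at h1
    simp only [map_zero, Finsupp.coe_zero, Pi.zero_apply] at h1
    have h2 : c 1 = 1 := by simp [hc, hqq1]
    rw [h2] at h1
    exact one_ne_zero h1.symm
  -- Part 3: uniqueness
  · intro v hv
    set a : W → ℂ := fun w => φ.repr v w with ha
    have hsum : ∑ w, a w • φ w = v := φ.sum_repr v
    have hrec : ∀ (w : W) (i : B), cs.length (w * cs.simple i) = cs.length w + 1 →
        a (w * cs.simple i) = a w * (-((q i : ℂ))⁻¹) := by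
      intro w i hlen
      have hwne : w * cs.simple i ≠ w := by
        intro h
        exact cs.length_mul_simple_ne w i (by rw [h])
      have heq : φ.repr (T i v) w = -(a w) := by
        rw [hv i, map_neg, Finsupp.neg_apply]
      have hTv : T i v = ∑ w', a w' • T i (φ w') := by
        conv_lhs => rw [← hsum]
        rw [map_sum]
        simp only [map_smul]
      have hexp : φ.repr (∑ w', a w' • T i (φ w')) w
          = ∑ w', a w' * φ.repr (T i (φ w')) w := by
        rw [map_sum, Finsupp.finset_sum_apply]
        simp only [map_smul, Finsupp.smul_apply, smul_eq_mul]
      have hmain : (∑ w', a w' * φ.repr (T i (φ w')) w)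
          = a (w * cs.simple i) * (q i : ℂ) := by
        rw [Finset.sum_eq_single (w * cs.simple i)]
        · have hdlen : cs.length ((w * cs.simple i) * cs.simple i) + 1
              = cs.length (w * cs.simple i) := by
            rw [cs.simple_mul_simple_cancel_right i]; omega
          rw [hdown i (w * cs.simple i) hdlen]
          rw [cs.simple_mul_simple_cancel_right i]
          simp [map_add, map_smul, Finsupp.add_apply, Finsupp.smul_apply, smul_eq_mul, Module.Basis.repr_self, Finsupp.single_apply, hwne]
          left
          rw [← Complex.coe_smul, map_smul, Finsupp.smul_apply, Module.Basis.repr_self]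
          simp
        · intro b _ hb
          rcases cs.length_mul_simple b i with hb' | hb'
          · rw [hup i b hb']
            have : b * cs.simple i ≠ w := by
              intro h
              apply hb
              rw [← h, cs.simple_mul_simple_cancel_right i]
            simp [Module.Basis.repr_self, Finsupp.single_apply, this]
          · rw [hdown i b hb']
            have h1 : b * cs.simple i ≠ w := by
              intro h
              apply hb
              rw [← h, cs.simple_mul_simple_cancel_right i]
            have h2 : b ≠ w := by
              intro h; rw [h] at hb'; omega
            simp [map_add, map_smul, Finsupp.add_apply, Finsupp.smul_apply, smul_eq_mul, Module.Basis.repr_self, Finsupp.single_apply, h1, h2]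
            right
            rw [← Complex.coe_smul, map_smul, Finsupp.smul_apply, Module.Basis.repr_self]
            simp [Finsupp.single_apply, h1]
        · intro h; exact absurd (Finset.mem_univ _) h
      have key : a (w * cs.simple i) * (q i : ℂ) = -(a w) := by
        rw [← hmain, ← hexp, ← hTv, heq]
      have hqi := hq0 i
      have : a (w * cs.simple i) = (a (w * cs.simple i) * (q i : ℂ)) * ((q i : ℂ))⁻¹ := by
        field_simp
      rw [this, key]; ring
    have main : ∀ n (w : W), cs.length w = n → a w = a 1 * c w := by
      intro n
      induction n with
      | zero =>
        intro w hw
        rw [cs.length_eq_zero_iff.mp hw]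
        simp [hc, hqq1]
      | succ n ih =>
        intro w hw
        have hne : w ≠ 1 := by
          intro h; rw [h, cs.length_one] at hw; omega
        obtain ⟨i, hi⟩ := cs.exists_rightDescent_of_ne_one hne
        rw [cs.isRightDescent_iff] at hi
        set w' := w * cs.simple i with hw'
        have hcan : w' * cs.simple i = w := cs.simple_mul_simple_cancel_right i
        have hlen : cs.length (w' * cs.simple i) = cs.length w' + 1 := by
          rw [hcan]; omega
        have h1 := hrec w' i hlen
        have h2 := crel w' i hlen
        rw [hcan] at h1 h2
        rw [h1, ih w' (by omega), h2]
        ring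
    refine ⟨a 1, ?_⟩
    have : v = ∑ w : W, (a 1 * c w) • φ w := by
      rw [← hsum]
      exact Finset.sum_congr rfl fun w _ => by rw [main (cs.length w) w rfl]
    rw [this, Finset.smul_sum]
    exact Finset.sum_congr rfl fun w _ => by rw [smul_smul]
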